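/- arXiv:2604.15986 — 3 statements merged into one kernel-verified Lean document; each statement's English description precedes it below -/
import Mathlib

section
/- Let H be a Hopf algebra over a field k with bijective antipode. If V and W are finite-dimensional H-modules that are both tensor-reducible, then V ⊗ W is tensor-reducible. -/
open TensorProduct

universe u

section TensorRep

variable (k H V W : Type u) [CommSemiring k] [Semiring H] [Bialgebra k H]
  [AddCommMonoid V] [Module k V] [Module H V] [IsScalarTower k H V] [SMulCommClass H k V]
  [AddCommMonoid W] [Module k W] [Module H W] [IsScalarTower k H W] [SMulCommClass H k W]

/-- The representation of the bialgebra `H` on the tensor product of two `H`-modules,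
given by the comultiplication of `H`. -/
noncomputable def tensorRep : H →ₐ[k] Module.End k (V ⊗[k] W) :=
  ((Module.endTensorEndAlgHom (R := k) (S := k) (A := k) (M := V) (N := W)).comp
    (Algebra.TensorProduct.map (Algebra.lsmul k k V) (Algebra.lsmul k k W))).comp
    (Bialgebra.comulAlgHom k H)

/-- The tensor product `V ⊗[k] W` of two `H`-modules, regarded as an `H`-module via the
comultiplication of `H` (a type synonym of `V ⊗[k] W`). -/
def ModuleTensor (_ : Type u) : Type u := V ⊗[k] W

variable {H}

noncomputable instance : AddCommMonoid (ModuleTensor k V W H) :=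
  inferInstanceAs (AddCommMonoid (V ⊗[k] W))

noncomputable instance : Module k (ModuleTensor k V W H) :=
  inferInstanceAs (Module k (V ⊗[k] W))

noncomputable instance instAddCommGroupModuleTensor
    {k V W : Type u} [CommSemiring k] [AddCommGroup V] [Module k V]
    [AddCommGroup W] [Module k W] (H : Type u) :
    AddCommGroup (ModuleTensor k V W H) :=
  inferInstanceAs (AddCommGroup (V ⊗[k] W))

variable (H)

/-- The `H`-module structure on `V ⊗[k] W` via the comultiplication of `H`. -/
noncomputable instance : Module H (ModuleTensor k V W H) :=
  Module.compHom (V ⊗[k] W) (tensorRep k H V W).toRingHom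

instance : IsScalarTower k H (ModuleTensor k V W H) :=
  ⟨fun c h x => by
    show (tensorRep k H V W (c • h)) x = c • ((tensorRep k H V W h) x)
    rw [map_smul]
    rfl⟩

instance : SMulCommClass H k (ModuleTensor k V W H) :=
  ⟨fun h c x => by
    show (tensorRep k H V W h) (c • x) = c • ((tensorRep k H V W h) x)
    exact (tensorRep k H V W h).map_smul c x⟩

end TensorRep

section Reducible

variable (k H : Type u) [Field k] [Ring H] [HopfAlgebra k H]

/-- An `H`-module `V` is left tensor-reducible if `V ⊗ W` is a semisimple `H`-module
for every irreducible finite-dimensional `H`-module `W`. -/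
def LeftTensorReducible (V : Type u) [AddCommGroup V] [Module k V] [Module H V]
    [IsScalarTower k H V] [SMulCommClass H k V] : Prop :=
  ∀ (W : Type u) [AddCommGroup W] [Module k W] [Module H W] [IsScalarTower k H W]
    [SMulCommClass H k W] [FiniteDimensional k W], IsSimpleModule H W →
      IsSemisimpleModule H (ModuleTensor k V W H)

/-- An `H`-module `V` is right tensor-reducible if `W ⊗ V` is a semisimple `H`-module
for every irreducible finite-dimensional `H`-module `W`. -/
def RightTensorReducible (V : Type u) [AddCommGroup V] [Module k V] [Module H V]
    [IsScalarTower k H V] [SMulCommClass H k V] : Prop :=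
  ∀ (W : Type u) [AddCommGroup W] [Module k W] [Module H W] [IsScalarTower k H W]
    [SMulCommClass H k W] [FiniteDimensional k W], IsSimpleModule H W →
      IsSemisimpleModule H (ModuleTensor k W V H)

/-- An `H`-module is tensor-reducible if it is both left and right tensor-reducible. -/
def TensorReducible (V : Type u) [AddCommGroup V] [Module k V] [Module H V]
    [IsScalarTower k H V] [SMulCommClass H k V] : Prop :=
  LeftTensorReducible k H V ∧ RightTensorReducible k H V

end Reducible


/-! The associator `(V ⊗ W) ⊗ U ≃ V ⊗ (W ⊗ U)` is `H`-linear by coassociativity of `Δ`, so it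
suffices to see that `V ⊗ M` is semisimple whenever `M` is finite-dimensional and semisimple
(here `M = W ⊗ U` with `U` simple). Such an `M` is the sum of its simple submodules `N`, so `V ⊗ M`
is the sum of the images of the modules `V ⊗ N`, which are semisimple by assumption on `V`.
The right-handed case is symmetric. -/

section TensorRep

variable {k H : Type u} [CommSemiring k] [Semiring H] [Bialgebra k H] {V W U V' W' : Type u}
  [AddCommMonoid V] [Module k V] [Module H V] [IsScalarTower k H V] [SMulCommClass H k V]
  [AddCommMonoid W] [Module k W] [Module H W] [IsScalarTower k H W] [SMulCommClass H k W]
  [AddCommMonoid U] [Module k U] [Module H U] [IsScalarTower k H U] [SMulCommClass H k U]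
  [AddCommMonoid V'] [Module k V'] [Module H V'] [IsScalarTower k H V'] [SMulCommClass H k V']
  [AddCommMonoid W'] [Module k W'] [Module H W'] [IsScalarTower k H W'] [SMulCommClass H k W']

theorem tensorRep_tmul (h : H) (v : V) (w : W) :
    tensorRep k H V W h (v ⊗ₜ w) =
      TensorProduct.map ((LinearMap.id : H →ₗ[k] H).smulRight v)
        ((LinearMap.id : H →ₗ[k] H).smulRight w) (Coalgebra.comul h) := by
  change Module.endTensorEndAlgHom (Algebra.TensorProduct.map (Algebra.lsmul k k V)
    (Algebra.lsmul k k W) (Coalgebra.comul h)) (v ⊗ₜ w) = _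
  induction Coalgebra.comul (R := k) h using TensorProduct.induction_on with
  | zero => simp
  | tmul a b => rfl
  | add c d hc hd => simp only [map_add, LinearMap.add_apply, hc, hd]

theorem ModuleTensor.smulRight_tmul (v : V) (w : W) :
    (LinearMap.id : H →ₗ[k] H).smulRight (show ModuleTensor k V W H from v ⊗ₜ[k] w) =
      TensorProduct.map ((LinearMap.id : H →ₗ[k] H).smulRight v)
        ((LinearMap.id : H →ₗ[k] H).smulRight w) ∘ₗ Coalgebra.comul :=
  LinearMap.ext fun h => tensorRep_tmul h v w

theorem map_comp_tensorRep (f : V →ₗ[H] V') (g : W →ₗ[H] W') (h : H) :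
    TensorProduct.map (f.restrictScalars k) (g.restrictScalars k) ∘ₗ tensorRep k H V W h =
      tensorRep k H V' W' h ∘ₗ TensorProduct.map (f.restrictScalars k) (g.restrictScalars k) := by
  refine TensorProduct.ext' fun v w => ?_
  change TensorProduct.map _ _ (tensorRep k H V W h (v ⊗ₜ w)) = tensorRep k H V' W' h (f v ⊗ₜ g w)
  rw [tensorRep_tmul, tensorRep_tmul, ← LinearMap.comp_apply, ← TensorProduct.map_comp]
  congr 3 <;> ext <;> simp

theorem assoc_comp_tensorRep (h : H) :
    (TensorProduct.assoc k V W U).toLinearMap ∘ₗ tensorRep k H (ModuleTensor k V W H) U h =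
      tensorRep k H V (ModuleTensor k W U H) h ∘ₗ (TensorProduct.assoc k V W U).toLinearMap := by
  refine TensorProduct.ext_threefold fun v w u => ?_
  change TensorProduct.assoc k V W U (tensorRep k H (ModuleTensor k V W H) U h
      ((show ModuleTensor k V W H from v ⊗ₜ w) ⊗ₜ u)) =
    tensorRep k H V (ModuleTensor k W U H) h (v ⊗ₜ (show ModuleTensor k W U H from w ⊗ₜ u))
  rw [tensorRep_tmul, tensorRep_tmul, ModuleTensor.smulRight_tmul, ModuleTensor.smulRight_tmul]
  have coassoc := congr(TensorProduct.map ((LinearMap.id : H →ₗ[k] H).smulRight v)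
    (TensorProduct.map ((LinearMap.id : H →ₗ[k] H).smulRight w)
      ((LinearMap.id : H →ₗ[k] H).smulRight u)) $(Coalgebra.coassoc_apply (R := k) h))
  rwa [LinearMap.map_lTensor, TensorProduct.map_map_assoc, LinearMap.map_rTensor] at coassoc

namespace ModuleTensor

instance [Module.Finite k V] [Module.Finite k W] : Module.Finite k (ModuleTensor k V W H) :=
  inferInstanceAs (Module.Finite k (V ⊗[k] W))

noncomputable def map (f : V →ₗ[H] V') (g : W →ₗ[H] W') :
    ModuleTensor k V W H →ₗ[H] ModuleTensor k V' W' H where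
  toFun := TensorProduct.map (f.restrictScalars k) (g.restrictScalars k)
  map_add' := map_add _
  map_smul' h := LinearMap.congr_fun (map_comp_tensorRep f g h)

noncomputable def assoc :
    ModuleTensor k (ModuleTensor k V W H) U H ≃ₗ[H] ModuleTensor k V (ModuleTensor k W U H) H :=
  { TensorProduct.assoc k V W U with
    map_smul' := fun h => LinearMap.congr_fun (assoc_comp_tensorRep h) }

theorem restrictScalars_range_map (f : V' →ₗ[H] V) (g : W' →ₗ[H] W) :
    (LinearMap.range (map (k := k) f g)).restrictScalars k =
      Submodule.map₂ (TensorProduct.mk k V W) ((LinearMap.range f).restrictScalars k)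
        ((LinearMap.range g).restrictScalars k) :=
  TensorProduct.range_map (f.restrictScalars k) (g.restrictScalars k)

theorem iSup_range_map_id_subtype {ι : Sort*} {p : ι → Submodule H W} (hp : iSup p = ⊤) :
    ⨆ i, LinearMap.range (map (k := k) (LinearMap.id : V →ₗ[H] V) (p i).subtype) = ⊤ := by
  rw [← Submodule.restrictScalars_eq_top_iff k, Submodule.restrictScalars_iSup]
  simp only [restrictScalars_range_map, LinearMap.range_id, Submodule.range_subtype,
    Submodule.restrictScalars_top]
  have := Submodule.map₂_iSup_right (TensorProduct.mk k V W) ⊤ fun i => (p i).restrictScalars k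
  rwa [← Submodule.restrictScalars_iSup, hp, Submodule.restrictScalars_top,
    TensorProduct.map₂_mk_top_top_eq_top, eq_comm] at this

theorem iSup_range_map_subtype_id {ι : Sort*} {p : ι → Submodule H V} (hp : iSup p = ⊤) :
    ⨆ i, LinearMap.range (map (k := k) (p i).subtype (LinearMap.id : W →ₗ[H] W)) = ⊤ := by
  rw [← Submodule.restrictScalars_eq_top_iff k, Submodule.restrictScalars_iSup]
  simp only [restrictScalars_range_map, LinearMap.range_id, Submodule.range_subtype,
    Submodule.restrictScalars_top]
  have := Submodule.map₂_iSup_left (TensorProduct.mk k V W) (fun i => (p i).restrictScalars k) ⊤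
  rwa [← Submodule.restrictScalars_iSup, hp, Submodule.restrictScalars_top,
    TensorProduct.map₂_mk_top_top_eq_top, eq_comm] at this

end ModuleTensor

end TensorRep

section TensorReducible

variable {k H : Type u} [Field k] [Ring H] [HopfAlgebra k H] {V W M : Type u}
  [AddCommGroup V] [Module k V] [Module H V] [IsScalarTower k H V] [SMulCommClass H k V]
  [AddCommGroup W] [Module k W] [Module H W] [IsScalarTower k H W] [SMulCommClass H k W]
  [AddCommGroup M] [Module k M] [Module H M] [IsScalarTower k H M] [SMulCommClass H k M]

instance [FiniteDimensional k M] (N : Submodule H M) : FiniteDimensional k N :=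
  Module.Finite.of_injective (N.subtype.restrictScalars k) N.injective_subtype

theorem LeftTensorReducible.isSemisimpleModule_moduleTensor [FiniteDimensional k M]
    [IsSemisimpleModule H M] (hV : LeftTensorReducible k H V) :
    IsSemisimpleModule H (ModuleTensor k V M H) := by
  refine isSemisimpleModule_of_isSemisimpleModule_submodule'
    (p := fun N : {N : Submodule H M // IsSimpleModule H N} =>
      LinearMap.range (ModuleTensor.map (k := k) LinearMap.id N.1.subtype)) (fun N => ?_) ?_
  · have := hV N.1 N.2
    exact IsSemisimpleModule.range _
  · refine ModuleTensor.iSup_range_map_id_subtype ?_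
    exact (sSup_eq_iSup' _).symm.trans (IsSemisimpleModule.sSup_simples_eq_top H M)

theorem RightTensorReducible.isSemisimpleModule_moduleTensor [FiniteDimensional k M]
    [IsSemisimpleModule H M] (hV : RightTensorReducible k H V) :
    IsSemisimpleModule H (ModuleTensor k M V H) := by
  refine isSemisimpleModule_of_isSemisimpleModule_submodule'
    (p := fun N : {N : Submodule H M // IsSimpleModule H N} =>
      LinearMap.range (ModuleTensor.map (k := k) N.1.subtype LinearMap.id)) (fun N => ?_) ?_
  · have := hV N.1 N.2
    exact IsSemisimpleModule.range _
  · refine ModuleTensor.iSup_range_map_subtype_id ?_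
    exact (sSup_eq_iSup' _).symm.trans (IsSemisimpleModule.sSup_simples_eq_top H M)

theorem LeftTensorReducible.moduleTensor [FiniteDimensional k W] (hV : LeftTensorReducible k H V)
    (hW : LeftTensorReducible k H W) : LeftTensorReducible k H (ModuleTensor k V W H) := by
  intro U _ _ _ _ _ _ hU
  have := hW U hU
  have := hV.isSemisimpleModule_moduleTensor (M := ModuleTensor k W U H)
  exact IsSemisimpleModule.congr ModuleTensor.assoc

theorem RightTensorReducible.moduleTensor [FiniteDimensional k V]
    (hV : RightTensorReducible k H V) (hW : RightTensorReducible k H W) :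
    RightTensorReducible k H (ModuleTensor k V W H) := by
  intro U _ _ _ _ _ _ hU
  have := hV U hU
  have := hW.isSemisimpleModule_moduleTensor (M := ModuleTensor k U V H)
  exact IsSemisimpleModule.congr ModuleTensor.assoc.symm

end TensorReducible

theorem tensorReducible_tensor_general
    {k H : Type u} [Field k] [Ring H] [HopfAlgebra k H]
    (V W : Type u) [AddCommGroup V] [Module k V] [Module H V] [IsScalarTower k H V]
    [SMulCommClass H k V] [FiniteDimensional k V]
    [AddCommGroup W] [Module k W] [Module H W] [IsScalarTower k H W]
    [SMulCommClass H k W] [FiniteDimensional k W]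
    (hV : TensorReducible k H V) (hW : TensorReducible k H W) :
    TensorReducible k H (ModuleTensor k V W H) :=
  ⟨hV.1.moduleTensor hW.1, hV.2.moduleTensor hW.2⟩

/-- If `V` and `W` are tensor-reducible `H`-modules over a Hopf algebra with bijective
antipode, then `V ⊗ W` is tensor-reducible. -/
theorem tensorReducible_tensor
    {k H : Type u} [Field k] [Ring H] [HopfAlgebra k H]
    (hS : Function.Bijective (HopfAlgebra.antipode (R := k) (A := H)))
    (V W : Type u) [AddCommGroup V] [Module k V] [Module H V] [IsScalarTower k H V]
    [SMulCommClass H k V] [FiniteDimensional k V]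
    [AddCommGroup W] [Module k W] [Module H W] [IsScalarTower k H W]
    [SMulCommClass H k W] [FiniteDimensional k W]
    (hV : TensorReducible k H V) (hW : TensorReducible k H W) :
    TensorReducible k H (ModuleTensor k V W H) :=
  tensorReducible_tensor_general V W hV hW
end

section
/- Let k be a field, k^+ its additive group, k^× its multiplicative group, and n a positive integer such that every element of k^× has an n-th root in k. Consider the semidirect product G = k^+ ⋊_φ k^× with multiplication (α_1, β_1)(α_2, β_2) = (α_1 + β_1^n α_2, β_1 β_2). Then the subgroup T = {(0, β) : β ∈ k^×} is a maximal subgroup of G: any subgroup of G properly containing T equals G. -/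
/-!
A subgroup `K` of `N ⋊[φ] G` containing `G` contains, together with any `x ∉ G`, the nontrivial
element `x.left` of `N` and all its `φ`-conjugates. When `G` acts transitively on `N \ {1}`,
`K` therefore contains `N`, hence all of `N ⋊[φ] G = N G`. For `k⁺ ⋊ kˣ` with `β` acting by
multiplication by `βⁿ`, transitivity on `kˣ` is exactly the existence of `n`-th roots.
-/

/-- The canonical monoid homomorphism `AddAut α →* MulAut (Multiplicative α)`. -/
def addAutToMulAut (α : Type*) [AddZeroClass α] :
    Multiplicative (AddAut α) →* MulAut (Multiplicative α) where
  toFun f := AddEquiv.toMultiplicative f.toAdd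
  map_one' := rfl
  map_mul' _ _ := rfl

/-- The action `φ : kˣ →* MulAut (Multiplicative k)`, `φ(β)(α) = β^n • α`. -/
def scalingHom (k : Type*) [Field k] (n : ℕ) : kˣ →* MulAut (Multiplicative k) :=
  ((addAutToMulAut k).comp (DistribMulAction.toAddAut kˣ k)).comp (powMonoidHom n)

namespace SemidirectProduct

variable {N G : Type*} [Group N] [Group G] {φ : G →* MulAut N} {K : Subgroup (N ⋊[φ] G)}

lemma left_ne_one_of_notMem_range_inr {x : N ⋊[φ] G} (hx : x ∉ (inr : G →* N ⋊[φ] G).range) :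
    x.left ≠ 1 :=
  fun h => hx ⟨x.right, by ext <;> simp [h]⟩

lemma inl_left_mem_of_range_inr_le (hK : (inr : G →* N ⋊[φ] G).range ≤ K) {x : N ⋊[φ] G}
    (hx : x ∈ K) : inl x.left ∈ K := by
  have hx_eq : x * inr x.right⁻¹ = inl x.left := by ext <;> simp
  exact hx_eq ▸ K.mul_mem hx (hK ⟨x.right⁻¹, rfl⟩)

lemma inl_aut_mem_of_range_inr_le (hK : (inr : G →* N ⋊[φ] G).range ≤ K) {n : N}
    (hn : inl n ∈ K) (g : G) : inl (φ g n) ∈ K := by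
  rw [inl_aut]
  exact K.mul_mem (K.mul_mem (hK ⟨g, rfl⟩) hn) (hK ⟨g⁻¹, rfl⟩)

lemma eq_top_of_range_inr_le_of_inl_mem (hK : (inr : G →* N ⋊[φ] G).range ≤ K)
    (hinl : ∀ n, inl n ∈ K) : K = ⊤ :=
  eq_top_iff.2 fun x _ => inl_left_mul_inr_right x ▸ K.mul_mem (hinl x.left) (hK ⟨x.right, rfl⟩)

theorem eq_top_of_range_inr_lt (htrans : ∀ a b : N, a ≠ 1 → b ≠ 1 → ∃ g, φ g a = b)
    (hK : (inr : G →* N ⋊[φ] G).range < K) : K = ⊤ := by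
  obtain ⟨x, hxK, hxT⟩ := SetLike.exists_of_lt hK
  refine eq_top_of_range_inr_le_of_inl_mem hK.le fun b => ?_
  rcases eq_or_ne b 1 with rfl | hb
  · simp
  obtain ⟨g, rfl⟩ := htrans _ _ (left_ne_one_of_notMem_range_inr hxT) hb
  exact inl_aut_mem_of_range_inr_le hK.le (inl_left_mem_of_range_inr_le hK.le hxK) g

end SemidirectProduct

lemma scalingHom_apply {k : Type*} [Field k] (n : ℕ) (β : kˣ) (a : Multiplicative k) :
    scalingHom k n β a = Multiplicative.ofAdd ((β : k) ^ n * a.toAdd) :=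
  rfl

lemma exists_scalingHom_apply_eq {k : Type*} [Field k] {n : ℕ}
    (hroot : ∀ β : kˣ, ∃ γ : kˣ, γ ^ n = β) {a b : Multiplicative k} (ha : a ≠ 1) (hb : b ≠ 1) :
    ∃ γ, scalingHom k n γ a = b := by
  have ha₀ : a.toAdd ≠ 0 := toAdd_eq_zero.not.2 ha
  obtain ⟨γ, hγ⟩ := hroot (Units.mk0 (b.toAdd / a.toAdd) (div_ne_zero (toAdd_eq_zero.not.2 hb) ha₀))
  refine ⟨γ, ?_⟩
  rw [scalingHom_apply, ← Units.val_pow_eq_pow_val, hγ, Units.val_mk0, div_mul_cancel₀ _ ha₀,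
    ofAdd_toAdd]

theorem inr_range_maximal_in_semidirectProduct_general
    {k : Type*} [Field k] (n : ℕ)
    (hroot : ∀ β : kˣ, ∃ γ : kˣ, γ ^ n = β)
    (K : Subgroup (SemidirectProduct (Multiplicative k) kˣ (scalingHom k n)))
    (hK : (SemidirectProduct.inr :
        kˣ →* SemidirectProduct (Multiplicative k) kˣ (scalingHom k n)).range < K) :
    K = ⊤ :=
  SemidirectProduct.eq_top_of_range_inr_lt (fun _ _ => exists_scalingHom_apply_eq hroot) hK

/-- In the semidirect product `k⁺ ⋊ kˣ` with `(α₁,β₁)(α₂,β₂) = (α₁ + β₁ⁿ α₂, β₁β₂)`,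
assuming every unit of `k` has an `n`-th root, the subgroup `T = {(0,β)}` is maximal:
any subgroup properly containing it is the whole group. -/
theorem inr_range_maximal_in_semidirectProduct
    {k : Type*} [Field k] (n : ℕ) (hn : 0 < n)
    (hroot : ∀ β : kˣ, ∃ γ : kˣ, γ ^ n = β)
    (K : Subgroup (SemidirectProduct (Multiplicative k) kˣ (scalingHom k n)))
    (hK : (SemidirectProduct.inr :
        kˣ →* SemidirectProduct (Multiplicative k) kˣ (scalingHom k n)).range < K) :
    K = ⊤ :=
  inr_range_maximal_in_semidirectProduct_general n hroot K hK
end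

section
/- Let H be a Hopf algebra over a field k, and let C be a central Hopf subalgebra closed under the antipode. For characters χ, ψ : C → k (algebra homomorphisms), with kernels m_χ, m_ψ, the comultiplication Δ : H → H ⊗ H induces a well-defined algebra homomorphism Δ_{χ,ψ} : H/(m_{χ*ψ} H) → H/(m_χ H) ⊗ H/(m_ψ H), where χ*ψ denotes the convolution product (χ*ψ)(c) = Σ χ(c_(1)) ψ(c_(2)). -/
open TensorProduct

/-- The two-sided ideal `m_θ H` of `H` generated by the image of the kernel of a
character `θ` of the central Hopf subalgebra `C`. -/
def charFiberIdeal {k C H : Type*} [CommSemiring k] [CommRing C] [Ring H]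
    [Algebra k C] [Algebra k H]
    (ι : C →ₐ[k] H) (θ : C →ₐ[k] k) : TwoSidedIdeal H :=
  TwoSidedIdeal.span (⇑ι '' {c : C | θ c = 0})

/-- The canonical projection onto the fiber algebra `H/m_θH`, as a `k`-algebra map. -/
def fiberProj {k H : Type*} [CommSemiring k] [Ring H] [Algebra k H]
    (I : TwoSidedIdeal H) : H →ₐ[k] I.ringCon.Quotient :=
  { I.ringCon.mk' with commutes' := fun _ => rfl }

/-- An algebra hom vanishing on a two-sided ideal descends to the quotient. -/
def twoSidedLift {k H T : Type*} [CommSemiring k] [Ring H] [Ring T]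
    [Algebra k H] [Algebra k T] (I : TwoSidedIdeal H) (g : H →ₐ[k] T)
    (hg : ∀ x ∈ I, g x = 0) : I.ringCon.Quotient →ₐ[k] T where
  toFun := fun x => Quotient.liftOn' x g (fun a b hab => by
    have h1 : a - b ∈ I := (TwoSidedIdeal.rel_iff I a b).mp hab
    have h2 := hg _ h1
    rw [map_sub, sub_eq_zero] at h2
    exact h2)
  map_one' := map_one g
  map_mul' := fun x y => Quotient.inductionOn₂' x y fun a b => map_mul g a b
  map_zero' := map_zero g
  map_add' := fun x y => Quotient.inductionOn₂' x y fun a b => map_add g a b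
  commutes' := fun r => g.commutes r

theorem twoSidedLift_mk {k H T : Type*} [CommSemiring k] [Ring H] [Ring T]
    [Algebra k H] [Algebra k T] (I : TwoSidedIdeal H) (g : H →ₐ[k] T)
    (hg : ∀ x ∈ I, g x = 0) (h : H) :
    twoSidedLift I g hg (fiberProj (k := k) I h) = g h := by rfl

theorem fiberProj_eq_zero {k H : Type*} [CommSemiring k] [Ring H] [Algebra k H]
    (I : TwoSidedIdeal H) {x : H} (hx : x ∈ I) : fiberProj (k := k) I x = 0 := by
  have : x ∈ TwoSidedIdeal.ker I.ringCon.mk' := by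
    rwa [TwoSidedIdeal.ker_ringCon_mk']
  exact (TwoSidedIdeal.mem_ker _).mp this

/-- The comultiplication of `H` descends to a well-defined algebra homomorphism
`H/m_{χ*ψ}H → H/m_χH ⊗ H/m_ψH`, where `χ*ψ` is the convolution of the characters
`χ` and `ψ` of the central Hopf subalgebra `C`. -/
theorem comul_descends_to_fibers
    {k C H : Type*} [Field k] [CommRing C] [Ring H]
    [HopfAlgebra k C] [HopfAlgebra k H]
    (ι : C →ₐ[k] H)
    (hcentral : ∀ (c : C) (h : H), ι c * h = h * ι c)
    (hcomul : ∀ c : C, Coalgebra.comul (R := k) (ι c)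
        = TensorProduct.map ι.toLinearMap ι.toLinearMap (Coalgebra.comul (R := k) c))
    (χ ψ τ : C →ₐ[k] k)
    (hτ : ∀ c : C, τ c = LinearMap.mul' k k
        (TensorProduct.map χ.toLinearMap ψ.toLinearMap (Coalgebra.comul (R := k) c))) :
    ∃ F : (charFiberIdeal ι τ).ringCon.Quotient →ₐ[k]
        ((charFiberIdeal ι χ).ringCon.Quotient ⊗[k] (charFiberIdeal ι ψ).ringCon.Quotient),
      ∀ h : H, F (fiberProj (k := k) (charFiberIdeal ι τ) h)
        = TensorProduct.map (fiberProj (charFiberIdeal ι χ)).toLinearMap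
            (fiberProj (charFiberIdeal ι ψ)).toLinearMap (Coalgebra.comul (R := k) h) := by
  classical
  set πχ := fiberProj (k := k) (charFiberIdeal ι χ) with hπχ
  set πψ := fiberProj (k := k) (charFiberIdeal ι ψ) with hπψ
  set Qχ := (charFiberIdeal ι χ).ringCon.Quotient
  set Qψ := (charFiberIdeal ι ψ).ringCon.Quotient
  -- the composite algebra hom H → Qχ ⊗ Qψ
  set g : H →ₐ[k] Qχ ⊗[k] Qψ :=
    (Algebra.TensorProduct.map πχ πψ).comp (Bialgebra.comulAlgHom k H) with hg
  have hgapp : ∀ h : H, g h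
      = TensorProduct.map πχ.toLinearMap πψ.toLinearMap (Coalgebra.comul (R := k) h) := by
    intro h
    rw [hg]
    simp only [AlgHom.coe_comp, Function.comp_apply, Bialgebra.comulAlgHom_apply]
    have heq : (Algebra.TensorProduct.map πχ πψ).toLinearMap
        = TensorProduct.map πχ.toLinearMap πψ.toLinearMap := by
      apply TensorProduct.ext'
      intro a b
      simp [Algebra.TensorProduct.map_tmul]
    exact congrArg (fun f : _ →ₗ[k] _ => f (Coalgebra.comul (R := k) h)) heq
  -- π ∘ ι sends c to the scalar given by the character
  have key : ∀ (θ : C →ₐ[k] k) (c : C),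
      fiberProj (k := k) (charFiberIdeal ι θ) (ι c)
        = algebraMap k (charFiberIdeal ι θ).ringCon.Quotient (θ c) := by
    intro θ c
    have hmem : ι (c - algebraMap k C (θ c)) ∈ charFiberIdeal ι θ := by
      apply TwoSidedIdeal.subset_span
      exact ⟨c - algebraMap k C (θ c), by simp, rfl⟩
    have := fiberProj_eq_zero (k := k) (charFiberIdeal ι θ) hmem
    rw [map_sub, map_sub, sub_eq_zero] at this
    rw [this, AlgHom.commutes, AlgHom.commutes]
  -- g kills ι c whenever τ c = 0
  have hker : ∀ c : C, τ c = 0 → g (ι c) = 0 := by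
    intro c hc
    rw [hgapp, hcomul, ← LinearMap.comp_apply, ← TensorProduct.map_comp]
    have h1 : (πχ.toLinearMap ∘ₗ ι.toLinearMap)
        = (Algebra.ofId k Qχ).toLinearMap ∘ₗ χ.toLinearMap := by
      ext c'; exact key χ c'
    have h2 : (πψ.toLinearMap ∘ₗ ι.toLinearMap)
        = (Algebra.ofId k Qψ).toLinearMap ∘ₗ ψ.toLinearMap := by
      ext c'; exact key ψ c'
    rw [h1, h2, TensorProduct.map_comp]
    have h3 : TensorProduct.map (Algebra.ofId k Qχ).toLinearMap (Algebra.ofId k Qψ).toLinearMap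
        = (Algebra.ofId k (Qχ ⊗[k] Qψ)).toLinearMap ∘ₗ LinearMap.mul' k k := by
      apply TensorProduct.ext'
      intro a b
      simp only [TensorProduct.map_tmul, LinearMap.coe_comp, Function.comp_apply,
        LinearMap.mul'_apply, AlgHom.toLinearMap_apply]
      show algebraMap k Qχ a ⊗ₜ[k] algebraMap k Qψ b = algebraMap k (Qχ ⊗[k] Qψ) (a * b)
      rw [Algebra.TensorProduct.algebraMap_apply, Algebra.algebraMap_eq_smul_one,
        Algebra.algebraMap_eq_smul_one, Algebra.algebraMap_eq_smul_one (A := Qχ),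
        ← TensorProduct.smul_tmul', ← TensorProduct.smul_tmul',
        TensorProduct.tmul_smul, smul_smul]
    rw [LinearMap.comp_apply, h3, LinearMap.comp_apply, ← hτ c, hc, map_zero]
  -- the ideal is contained in the kernel of g
  have hideal : ∀ x ∈ charFiberIdeal ι τ, g x = 0 := by
    intro x hx
    have : x ∈ TwoSidedIdeal.ker g := by
      rw [charFiberIdeal, TwoSidedIdeal.mem_span_iff] at hx
      refine hx (TwoSidedIdeal.ker g) ?_
      rintro _ ⟨c, hc, rfl⟩
      exact (TwoSidedIdeal.mem_ker g).mpr (hker c hc)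
    exact (TwoSidedIdeal.mem_ker g).mp this
  refine ⟨twoSidedLift _ g hideal, fun h => ?_⟩
  rw [twoSidedLift_mk, hgapp]
end
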